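/- The map Φ : ℂⁿ ⊃ {Im z_n > f(z')} → ℂⁿ given by z ↦ (1/(i + z_n), z'/(i + z_n)) is well-defined and injective on any domain D ⊂ {(z', z_n) : Im z_n > f(z')} where f : ℂ^{n−1} → [0,∞) is convex with liminf_{‖z'‖→∞} f(z')/‖z'‖ > 0, and the image Φ(D) is bounded. -/

import Mathlib

open Set Complex

/-! Since `Im z_n > f(z') ≥ 0`, we have `|i + z_n| ≥ 1 + Im z_n > 1 + f(z')`, so `1/(i + z_n)` has
modulus at most `1`, while the linear growth of `f` gives `‖z'‖ ≤ K (1 + f(z')) ≤ K |i + z_n|`. -/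

def inversionMap {𝕜 E : Type*} [DivisionRing 𝕜] [AddCommGroup E] [Module 𝕜 E] (a : 𝕜)
    (p : E × 𝕜) : 𝕜 × E :=
  ((a + p.2)⁻¹, (a + p.2)⁻¹ • p.1)

theorem injOn_inversionMap {𝕜 E : Type*} [DivisionRing 𝕜] [AddCommGroup E] [Module 𝕜 E]
    [Module.IsTorsionFree 𝕜 E] (a : 𝕜) {D : Set (E × 𝕜)} (hD : ∀ p ∈ D, a + p.2 ≠ 0) :
    InjOn (inversionMap a) D := by
  intro p hp q hq hpq
  obtain ⟨hfst, hsnd⟩ := Prod.ext_iff.mp hpq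
  have hshift : a + p.2 = a + q.2 := inv_injective hfst
  rw [inversionMap, inversionMap, hshift] at hsnd
  exact Prod.ext (smul_right_injective E (inv_ne_zero (hshift ▸ hD p hp)) hsnd)
    (add_left_cancel hshift)

theorem isBounded_image_inversionMap {𝕜 E : Type*} [NormedDivisionRing 𝕜]
    [SeminormedAddCommGroup E] [Module 𝕜 E] [NormSMulClass 𝕜 E] (a : 𝕜) {D : Set (E × 𝕜)}
    {K : ℝ} (hD : ∀ p ∈ D, 1 ≤ ‖a + p.2‖ ∧ ‖p.1‖ ≤ K * ‖a + p.2‖) :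
    Bornology.IsBounded (inversionMap a '' D) := by
  refine isBounded_iff_forall_norm_le.mpr ⟨max 1 K, ?_⟩
  rintro _ ⟨p, hp, rfl⟩
  obtain ⟨hone, hle⟩ := hD p hp
  simp only [inversionMap, norm_prod_le_iff, norm_inv, norm_smul]
  refine ⟨(inv_le_one_of_one_le₀ hone).trans (le_max_left _ _), ?_⟩
  rw [inv_mul_le_iff₀ (one_pos.trans_le hone)]
  calc ‖p.1‖ ≤ K * ‖a + p.2‖ := hle
    _ ≤ max 1 K * ‖a + p.2‖ := by gcongr; exact le_max_right _ _
    _ = ‖a + p.2‖ * max 1 K := mul_comm _ _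

theorem norm_le_of_linear_growth {E : Type*} [SeminormedAddCommGroup E] {g : E → ℝ} {c R : ℝ}
    (hc : 0 < c) (hg : ∀ x, 0 ≤ g x) (hgrowth : ∀ x, R ≤ ‖x‖ → c * ‖x‖ ≤ g x) (x : E) :
    ‖x‖ ≤ max c⁻¹ R * (1 + g x) := by
  rcases le_or_gt R ‖x‖ with hR | hR
  · calc ‖x‖ = c⁻¹ * (c * ‖x‖) := by field_simp
      _ ≤ max c⁻¹ R * (1 + g x) := by
        gcongr
        · exact le_max_left _ _
        · linarith [hgrowth x hR]
  · calc ‖x‖ ≤ max c⁻¹ R * 1 := by rw [mul_one]; exact hR.le.trans (le_max_right _ _)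
      _ ≤ max c⁻¹ R * (1 + g x) := by
        gcongr
        linarith [hg x]

theorem one_add_im_le_norm_I_add (z : ℂ) : 1 + z.im ≤ ‖I + z‖ :=
  calc 1 + z.im = (I + z).im := by simp
    _ ≤ ‖I + z‖ := (le_abs_self _).trans (abs_im_le_norm _)

theorem stmt_14 {m : ℕ} (f : EuclideanSpace ℂ (Fin m) → ℝ)
    (hnonneg : ∀ z', 0 ≤ f z')
    -- liminf of `f(z')/‖z'‖` as `‖z'‖ → ∞` is positive :
    (hgrowth : ∃ c > (0:ℝ), ∃ R : ℝ, ∀ z', R ≤ ‖z'‖ → c * ‖z'‖ ≤ f z')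
    (D : Set (EuclideanSpace ℂ (Fin m) × ℂ))
    (hD : D ⊆ {p | f p.1 < p.2.im}) :
    (∀ p ∈ D, Complex.I + p.2 ≠ 0) ∧
      Set.InjOn
        (fun p : EuclideanSpace ℂ (Fin m) × ℂ =>
          ((Complex.I + p.2)⁻¹, (Complex.I + p.2)⁻¹ • p.1)) D ∧
      Bornology.IsBounded
        ((fun p : EuclideanSpace ℂ (Fin m) × ℂ =>
          ((Complex.I + p.2)⁻¹, (Complex.I + p.2)⁻¹ • p.1)) '' D) := by
  obtain ⟨c, hc, R, hR⟩ := hgrowth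
  have hnorm : ∀ p ∈ D, 1 + f p.1 ≤ ‖I + p.2‖ := fun p hp =>
    (add_le_add_right (hD hp).le 1).trans (one_add_im_le_norm_I_add p.2)
  have hone : ∀ p ∈ D, 1 ≤ ‖I + p.2‖ := fun p hp =>
    (le_add_of_nonneg_right (hnonneg p.1)).trans (hnorm p hp)
  have hne : ∀ p ∈ D, I + p.2 ≠ 0 := fun p hp => norm_pos_iff.mp (one_pos.trans_le (hone p hp))
  have hbound : ∀ p ∈ D, ‖p.1‖ ≤ max c⁻¹ R * ‖I + p.2‖ := fun p hp =>
    (norm_le_of_linear_growth hc hnonneg hR p.1).trans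
      (mul_le_mul_of_nonneg_left (hnorm p hp) ((inv_pos.mpr hc).le.trans (le_max_left _ _)))
  exact ⟨hne, injOn_inversionMap I hne,
    isBounded_image_inversionMap I fun p hp => ⟨hone p hp, hbound p hp⟩⟩
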